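/- arXiv:1801.08876 — 3 statements merged into one kernel-verified Lean document; each statement's English description precedes it below -/
import Mathlib

section
/- For every finite graph G with at least one edge, the edge set E(G) can be partitioned into at most Δ(G) parts each of which is locally regular, where Δ(G) denotes the maximum degree of G. (Equivalently, the regular chromatic index χ'_reg(G) is at most Δ(G).) -/
/-
Induction on the maximum degree `D`: it suffices to find a locally regular `F ⊆ E(G)` meeting
every vertex of degree `D`, since `G - F` then has maximum degree at most `D - 1`. All such
vertices have degree `D` and no vertex has more, so Hall's condition holds and each of them can be
assigned a distinct neighbour `σ a`. The edges `s(a, σ a)` form a functional graph of paths and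
cycles: repeatedly take the first edge of a path as a component `K₂`; once `σ` permutes what
is left, those edges form vertex-disjoint cycles and `K₂`s (the `2`-cycles of `σ`), all regular.
-/

open SimpleGraph

variable {V : Type*}

/-- The degree of a vertex `v` in an edge part `E`: the number of edges of `E` incident to `v`. -/
noncomputable def partDeg (E : Set (Sym2 V)) (v : V) : ℕ :=
  {e ∈ E | v ∈ e}.ncard

/-- A part is a matching if no two of its edges share a vertex. -/
def IsMatchingPart (E : Set (Sym2 V)) : Prop :=
  ∀ e ∈ E, ∀ f ∈ E, e ≠ f → ∀ v : V, v ∈ e → v ∉ f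

/-- A part is locally irregular if the endpoints of each of its edges have distinct degrees. -/
def IsLocallyIrregularPart (E : Set (Sym2 V)) : Prop :=
  ∀ u v : V, s(u, v) ∈ E → partDeg E u ≠ partDeg E v

/-- A part is locally regular if the endpoints of each of its edges have equal degrees. -/
def IsLocallyRegularPart (E : Set (Sym2 V)) : Prop :=
  ∀ u v : V, s(u, v) ∈ E → partDeg E u = partDeg E v

/-- A part is regular if all vertices incident to one of its edges have the same degree `r ≥ 1`. -/
def IsRegularPart (E : Set (Sym2 V)) : Prop :=
  ∃ r : ℕ, 1 ≤ r ∧ ∀ v : V, (∃ e ∈ E, v ∈ e) → partDeg E v = r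

/-- A part is `r`-regular if every vertex incident to one of its edges has degree `r` in it. -/
def IsRegularPartOfDeg (r : ℕ) (E : Set (Sym2 V)) : Prop :=
  ∀ v : V, (∃ e ∈ E, v ∈ e) → partDeg E v = r

/-- A part is locally `k`-irregular if endpoint degrees of each edge differ by at least `k`. -/
def IsLocallyKIrregularPart (k : ℕ) (E : Set (Sym2 V)) : Prop :=
  ∀ u v : V, s(u, v) ∈ E → (k : ℤ) ≤ |(partDeg E u : ℤ) - (partDeg E v : ℤ)|

/-- The maximum degree of a finite graph. -/
noncomputable def maxDeg [Fintype V] (G : SimpleGraph V) : ℕ :=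
  Finset.univ.sup fun v => partDeg G.edgeSet v

theorem partDeg_mono [Finite V] {E F : Set (Sym2 V)} (h : E ⊆ F) (v : V) :
    partDeg E v ≤ partDeg F v :=
  Set.ncard_le_ncard (fun _ he => ⟨h he.1, he.2⟩)

theorem partDeg_pos_iff [Finite V] {E : Set (Sym2 V)} {v : V} :
    0 < partDeg E v ↔ ∃ e ∈ E, v ∈ e :=
  Set.ncard_pos

theorem partDeg_diff [Finite V] {E F : Set (Sym2 V)} (h : F ⊆ E) (v : V) :
    partDeg (E \ F) v = partDeg E v - partDeg F v := by
  have hsub : {e ∈ F | v ∈ e} ⊆ {e ∈ E | v ∈ e} := fun e he => ⟨h he.1, he.2⟩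
  rw [partDeg, partDeg, partDeg, ← Set.ncard_sdiff hsub]
  congr 1
  ext e
  simp only [Set.mem_ofPred_eq, Set.mem_sdiff]
  tauto

theorem partDeg_union_of_forall_notMem {E F : Set (Sym2 V)} {v : V} (h : ∀ f ∈ F, v ∉ f) :
    partDeg (E ∪ F) v = partDeg E v := by
  unfold partDeg
  congr 1
  ext e
  simp only [Set.mem_ofPred_eq, Set.mem_union]
  grind

theorem partDeg_singleton {e : Sym2 V} {v : V} (hv : v ∈ e) : partDeg {e} v = 1 := by
  rw [partDeg, ← Set.ncard_singleton e]
  congr 1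
  ext f
  simp only [Set.mem_ofPred_eq, Set.mem_singleton_iff, and_iff_left_iff_imp]
  rintro rfl
  exact hv

theorem SimpleGraph.partDeg_edgeSet [Fintype V] (G : SimpleGraph V) [DecidableRel G.Adj]
    (v : V) :
    partDeg G.edgeSet v = G.degree v := by
  classical
  rw [← G.card_incidenceSet_eq_degree, ← Nat.card_eq_fintype_card, Nat.card_coe_set_eq]
  rfl

theorem isLocallyRegularPart_singleton (e : Sym2 V) : IsLocallyRegularPart {e} := by
  intro u v huv
  rw [Set.mem_singleton_iff] at huv
  rw [partDeg_singleton (huv ▸ Sym2.mem_mk_left u v),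
    partDeg_singleton (huv ▸ Sym2.mem_mk_right u v)]

theorem IsLocallyRegularPart.union {E F : Set (Sym2 V)} (hE : IsLocallyRegularPart E)
    (hF : IsLocallyRegularPart F) (hsep : ∀ e ∈ E, ∀ f ∈ F, ∀ v ∈ e, v ∉ f) :
    IsLocallyRegularPart (E ∪ F) := by
  rintro u v (huv | huv)
  · rw [partDeg_union_of_forall_notMem (hsep _ huv · · u (Sym2.mem_mk_left u v)),
      partDeg_union_of_forall_notMem (hsep _ huv · · v (Sym2.mem_mk_right u v))]
    exact hE u v huv
  · have hsep' : ∀ w ∈ s(u, v), ∀ e ∈ E, w ∉ e :=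
      fun w hw e he hwe => hsep e he _ huv w hwe hw
    rw [Set.union_comm, partDeg_union_of_forall_notMem (hsep' u (Sym2.mem_mk_left u v)),
      partDeg_union_of_forall_notMem (hsep' v (Sym2.mem_mk_right u v))]
    exact hF u v huv

theorem isLocallyRegularPart_image_of_bijOn {σ : V → V} {A : Set V} (hσ : Set.BijOn σ A A)
    (hfix : ∀ a ∈ A, σ a ≠ a) : IsLocallyRegularPart ((fun a => s(a, σ a)) '' A) := by
  classical
  set F := (fun a => s(a, σ a)) '' A
  -- each `u ∈ A` lies on its out-edge `s(u, σ u)` and its in-edge `s(c, u)`,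
  -- which coincide iff `σ (σ u) = u`
  have hdeg : ∀ u ∈ A, partDeg F u = if σ (σ u) = u then 1 else 2 := by
    intro u hu
    obtain ⟨c, hc, rfl⟩ := hσ.surjOn hu
    have hincident : {e ∈ F | σ c ∈ e} = {s(σ c, σ (σ c)), s(c, σ c)} := by
      ext e
      simp only [F, Set.mem_ofPred_eq, Set.mem_image, Set.mem_insert_iff, Set.mem_singleton_iff]
      constructor
      · rintro ⟨⟨a, ha, rfl⟩, hmem⟩
        rcases Sym2.mem_iff.mp hmem with rfl | h
        · exact Or.inl rfl
        · exact Or.inr (by rw [hσ.injOn ha hc h.symm])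
      · rintro (rfl | rfl)
        · exact ⟨⟨σ c, hσ.mapsTo hc, rfl⟩, Sym2.mem_mk_left _ _⟩
        · exact ⟨⟨c, hc, rfl⟩, Sym2.mem_mk_right _ _⟩
    rw [partDeg, hincident]
    by_cases h2 : σ (σ (σ c)) = σ c
    · rw [if_pos h2, hσ.injOn (hσ.mapsTo (hσ.mapsTo hc)) hc h2, Sym2.eq_swap,
        Set.pair_eq_singleton, Set.ncard_singleton]
    · rw [if_neg h2, Set.ncard_pair]
      grind [hfix c hc]
  have hcycle : ∀ a ∈ A, σ (σ (σ a)) = σ a ↔ σ (σ a) = a := fun a ha =>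
    ⟨fun h => hσ.injOn (hσ.mapsTo (hσ.mapsTo ha)) ha h, fun h => by rw [h]⟩
  rintro x y ⟨a, ha, hxy⟩
  rcases Sym2.eq_iff.mp hxy with ⟨rfl, rfl⟩ | ⟨rfl, rfl⟩ <;>
    rw [hdeg a ha, hdeg _ (hσ.mapsTo ha), hcycle a ha]

theorem exists_isLocallyRegularPart_subset_image_covering [Finite V] {σ : V → V} (A : Finset V)
    (hinj : Set.InjOn σ A) (hfix : ∀ a ∈ A, σ a ≠ a) :
    ∃ F ⊆ (fun a => s(a, σ a)) '' (A : Set V),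
      IsLocallyRegularPart F ∧ ∀ a ∈ A, 0 < partDeg F a := by
  classical
  induction A using Finset.strongInduction with
  | H A ih =>
  by_cases hsurj : Set.SurjOn σ A A
  · have hbij : Set.BijOn σ A A :=
      ⟨Set.mapsTo_iff_image_subset.mpr
        (Set.eq_of_subset_of_ncard_le hsurj hinj.ncard_image.le).ge, hinj, hsurj⟩
    refine ⟨_, subset_rfl, isLocallyRegularPart_image_of_bijOn hbij hfix, fun a ha => ?_⟩
    exact partDeg_pos_iff.mpr ⟨_, ⟨a, ha, rfl⟩, Sym2.mem_mk_left _ _⟩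
  -- otherwise some `a₀ ∈ A` has no `σ`-preimage in `A`, so `s(a₀, σ a₀)` shares no vertex
  -- with the edges `s(a, σ a)`, `a ∈ A \ {a₀, σ a₀}`
  obtain ⟨a₀, ha₀, ha₀σ⟩ := Set.not_subset.mp hsurj
  set A' := (A.erase a₀).erase (σ a₀)
  have hA' : A' ⊆ A := (Finset.erase_subset _ _).trans (Finset.erase_subset _ _)
  obtain ⟨F', hF'sub, hF'reg, hF'cov⟩ :=
    ih A' ((Finset.erase_subset _ _).trans_ssubset (Finset.erase_ssubset ha₀))
      (hinj.mono (by exact_mod_cast hA')) (fun a ha => hfix a (hA' ha))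
  refine ⟨{s(a₀, σ a₀)} ∪ F', ?_, ?_, ?_⟩
  · refine Set.union_subset ?_ (hF'sub.trans (Set.image_mono (by exact_mod_cast hA')))
    exact Set.singleton_subset_iff.mpr ⟨a₀, ha₀, rfl⟩
  · refine (isLocallyRegularPart_singleton _).union hF'reg ?_
    rintro _ rfl _ hf v hv
    obtain ⟨a, ha, rfl⟩ := hF'sub hf
    have haA : a ∈ A := hA' ha
    have hσa : σ a ≠ a₀ := fun h => ha₀σ ⟨a, haA, h⟩
    have hσinj : σ a = σ a₀ → a = a₀ := fun h => hinj haA ha₀ h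
    grind
  · intro a ha
    by_cases haA' : a ∈ A'
    · exact (hF'cov a haA').trans_le (partDeg_mono Set.subset_union_right a)
    · refine partDeg_pos_iff.mpr ⟨s(a₀, σ a₀), Or.inl rfl, ?_⟩
      simp only [A', Finset.mem_erase] at haA'
      grind

theorem SimpleGraph.exists_injOn_adj_of_degree_eq [Fintype V] (G : SimpleGraph V)
    [DecidableRel G.Adj] {D : ℕ} (hD : 0 < D) (hmax : ∀ v, G.degree v ≤ D) (A : Finset V)
    (hA : ∀ a ∈ A, G.degree a = D) :
    ∃ σ : V → V, Set.InjOn σ A ∧ ∀ a ∈ A, G.Adj a (σ a) := by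
  classical
  have hall : ∀ s : Finset A, s.card ≤ (s.biUnion fun a => G.neighborFinset a).card := by
    intro s
    set N := s.biUnion fun a => G.neighborFinset a
    -- double counting the edges between `s` and `N`:
    -- exactly `D` at each `a ∈ s`, at most `D` at each `b ∈ N`
    refine Nat.le_of_mul_le_mul_right (Finset.card_mul_le_card_mul (s := s) (t := N)
      (fun (a : A) b => G.Adj a b) (fun a ha => ?_) (fun b _ => ?_)) hD
    · rw [← hA a a.2, ← G.card_neighborFinset_eq_degree]
      refine Finset.card_le_card fun b hb => ?_
      exact Finset.mem_filter.mpr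
        ⟨Finset.mem_biUnion.mpr ⟨a, ha, hb⟩, (G.mem_neighborFinset _ _).mp hb⟩
    · refine le_trans ?_ ((G.card_neighborFinset_eq_degree b).trans_le (hmax b))
      refine Finset.card_le_card_of_injOn Subtype.val (fun a ha => ?_) Subtype.val_injective.injOn
      exact (G.mem_neighborFinset _ _).mpr (Finset.mem_filter.mp ha).2.symm
  obtain ⟨f, hf, hadj⟩ := (Finset.all_card_le_biUnion_card_iff_exists_injective _).mp hall
  refine ⟨fun v => if h : v ∈ A then f ⟨v, h⟩ else v, fun a ha b hb hab => ?_, fun a ha => ?_⟩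
  · simp only [Finset.mem_coe] at ha hb
    exact congrArg Subtype.val (hf (by simpa [ha, hb] using hab))
  · simpa [ha] using hadj ⟨a, ha⟩

theorem SimpleGraph.exists_isLocallyRegularPart_covering_partDeg_eq [Fintype V]
    (G : SimpleGraph V) {D : ℕ} (hD : 0 < D) (hmax : ∀ v, partDeg G.edgeSet v ≤ D) :
    ∃ F ⊆ G.edgeSet, IsLocallyRegularPart F ∧
      ∀ v, partDeg G.edgeSet v = D → 0 < partDeg F v := by
  classical
  set A := Finset.univ.filter fun v => partDeg G.edgeSet v = D
  obtain ⟨σ, hinj, hadj⟩ := G.exists_injOn_adj_of_degree_eq hD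
    (fun v => G.partDeg_edgeSet v ▸ hmax v) A
    (fun a ha => G.partDeg_edgeSet a ▸ (Finset.mem_filter.mp ha).2)
  obtain ⟨F, hFsub, hFreg, hFcov⟩ :=
    exists_isLocallyRegularPart_subset_image_covering A hinj fun a ha => (hadj a ha).ne'
  refine ⟨F, hFsub.trans ?_, hFreg, fun v hv => hFcov v (by simp [A, hv])⟩
  rintro _ ⟨a, ha, rfl⟩
  exact hadj a ha

theorem iUnion_fin_cons {α : Type*} {t : ℕ} (F : Set α) (P : Fin t → Set α) :
    (⋃ i, Fin.cons (α := fun _ => Set α) F P i) = F ∪ ⋃ i, P i := by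
  ext e
  simp

theorem pairwise_disjoint_fin_cons {α : Type*} {t : ℕ} {F : Set α} {P : Fin t → Set α}
    (hF : ∀ i, Disjoint F (P i)) (hP : ∀ i j, i ≠ j → Disjoint (P i) (P j)) :
    ∀ i j, i ≠ j →
      Disjoint (Fin.cons (α := fun _ => Set α) F P i) (Fin.cons (α := fun _ => Set α) F P j) := by
  intro i j
  cases i using Fin.cases <;> cases j using Fin.cases <;> simp_all [disjoint_comm]

theorem SimpleGraph.exists_locallyRegular_partition_of_partDeg_le [Fintype V]
    (G : SimpleGraph V) {D : ℕ} (hmax : ∀ v, partDeg G.edgeSet v ≤ D) :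
      ∃ P : Fin D → Set (Sym2 V), (⋃ i, P i) = G.edgeSet ∧
        (∀ i j, i ≠ j → Disjoint (P i) (P j)) ∧ ∀ i, IsLocallyRegularPart (P i) := by
  induction D generalizing G with
  | zero =>
    refine ⟨Fin.elim0, ?_, fun i => i.elim0, fun i => i.elim0⟩
    rw [Set.iUnion_of_empty, eq_comm, Set.eq_empty_iff_forall_notMem]
    intro e he
    induction e using Sym2.ind with
    | _ u v =>
      exact (partDeg_pos_iff.mpr ⟨_, he, Sym2.mem_mk_left u v⟩).ne' (Nat.le_zero.mp (hmax u))
  | succ D ih =>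
    obtain ⟨F, hFsub, hFreg, hFcov⟩ :=
      G.exists_isLocallyRegularPart_covering_partDeg_eq D.succ_pos hmax
    have hmax' : ∀ v, partDeg (G.deleteEdges F).edgeSet v ≤ D := by
      intro v
      rw [edgeSet_deleteEdges, partDeg_diff hFsub]
      have := hmax v
      have := hFcov v
      omega
    obtain ⟨P, hPU, hPdisj, hPreg⟩ := ih _ hmax'
    rw [edgeSet_deleteEdges] at hPU
    refine ⟨Fin.cons F P, ?_, pairwise_disjoint_fin_cons (fun i => ?_) hPdisj, ?_⟩
    · rw [iUnion_fin_cons, hPU, Set.union_sdiff_cancel hFsub]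
    · exact Set.disjoint_sdiff_right.mono_right (hPU ▸ Set.subset_iUnion P i)
    · intro i
      cases i using Fin.cases <;> simp [hFreg, hPreg]

theorem stmt_3_general {V : Type*} [Fintype V] (G : SimpleGraph V) :
    ∃ (t : ℕ) (P : Fin t → Set (Sym2 V)),
      t ≤ maxDeg G ∧
      (⋃ i, P i) = G.edgeSet ∧
      (∀ i j, i ≠ j → Disjoint (P i) (P j)) ∧
      ∀ i, IsLocallyRegularPart (P i) := by
  have hmax : ∀ v, partDeg G.edgeSet v ≤ maxDeg G := fun v => Finset.le_sup (Finset.mem_univ v)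
  obtain ⟨P, hP⟩ := G.exists_locallyRegular_partition_of_partDeg_le hmax
  exact ⟨maxDeg G, P, le_rfl, hP⟩

/-- every finite graph with at least one edge admits a partition of its edge set
into at most Δ(G) locally regular parts. -/
theorem stmt_3 {V : Type*} [Fintype V] (G : SimpleGraph V) (hE : G.edgeSet.Nonempty) :
    ∃ (t : ℕ) (P : Fin t → Set (Sym2 V)),
      t ≤ maxDeg G ∧
      (⋃ i, P i) = G.edgeSet ∧
      (∀ i j, i ≠ j → Disjoint (P i) (P j)) ∧
      ∀ i, IsLocallyRegularPart (P i) :=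
  stmt_3_general G
end

section
/- Let G be a finite graph in which every vertex has degree 1, 4 or 5, and let G' be the induced subgraph of G on the set of vertices of degree 1 or 5. Then E(G) can be partitioned into two (possibly empty) parts E₁ and E₂ such that E₁ is a 1-regular part and E₂ is a 4-regular part if and only if G' has a perfect matching, i.e., a set M of edges of G' such that every vertex of G' is incident to exactly one edge of M. -/
open SimpleGraph

variable {V : Type*}

/-!
The argument works for any `r ≠ 1` in place of `4`. In a partition into a 1-regular part `E₁` and
an `r`-regular part `E₂` every degree is `d₁ + d₂` with `d₁ ∈ {0, 1}` and `d₂ ∈ {0, r}`, so the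
vertices of degree `1` or `r + 1` are exactly those covered by `E₁`, which is then a perfect
matching of them. Conversely, removing such a matching `F` leaves degree `r` at every vertex
still covered: degree-`r` vertices lose nothing, since `F` only touches vertices of degree `1` or
`r + 1`, and those lose exactly one edge.
-/

lemma partDeg_eq_zero {E : Set (Sym2 V)} {v : V} (h : ¬∃ e ∈ E, v ∈ e) : partDeg E v = 0 := by
  have hempty : {e ∈ E | v ∈ e} = ∅ := Set.eq_empty_iff_forall_notMem.mpr fun e he => h ⟨e, he⟩
  rw [partDeg, hempty, Set.ncard_empty]

lemma partDeg_pos [Finite V] {E : Set (Sym2 V)} {v : V} (h : ∃ e ∈ E, v ∈ e) :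
    0 < partDeg E v :=
  (Set.ncard_pos).mpr h

lemma partDeg_union_of_disjoint [Finite V] {A B : Set (Sym2 V)} (h : Disjoint A B) (v : V) :
    partDeg (A ∪ B) v = partDeg A v + partDeg B v := by
  have hsep : {e ∈ A ∪ B | v ∈ e} = {e ∈ A | v ∈ e} ∪ {e ∈ B | v ∈ e} := Set.sep_union
  rw [partDeg, hsep]
  exact Set.ncard_union_eq (h.mono (Set.sep_subset _ _) (Set.sep_subset _ _))

lemma IsRegularPartOfDeg.partDeg_eq_zero_or_eq {r : ℕ} {E : Set (Sym2 V)}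
    (h : IsRegularPartOfDeg r E) (v : V) : partDeg E v = 0 ∨ partDeg E v = r := by
  by_cases hv : ∃ e ∈ E, v ∈ e
  · exact .inr (h v hv)
  · exact .inl (partDeg_eq_zero hv)

section Partition

variable [Finite V] {E E₁ E₂ : Set (Sym2 V)} {r : ℕ}

lemma partDeg_eq_one_or_eq_succ_iff (hr : r ≠ 1) (hunion : E₁ ∪ E₂ = E) (hdisj : Disjoint E₁ E₂)
    (h₁ : IsRegularPartOfDeg 1 E₁) (h₂ : IsRegularPartOfDeg r E₂) (v : V) :
    partDeg E v = 1 ∨ partDeg E v = r + 1 ↔ partDeg E₁ v = 1 := by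
  have hsum := hunion ▸ partDeg_union_of_disjoint hdisj v
  rcases h₁.partDeg_eq_zero_or_eq v with hv₁ | hv₁ <;>
    rcases h₂.partDeg_eq_zero_or_eq v with hv₂ | hv₂ <;> omega

lemma isRegularPartOfDeg_sdiff
    (hdeg : ∀ v, partDeg E v ∈ ({1, r, r + 1} : Set ℕ)) {F : Set (Sym2 V)}
    (hF : F ⊆ {e ∈ E | ∀ v ∈ e, partDeg E v = 1 ∨ partDeg E v = r + 1})
    (hFdeg : ∀ v, partDeg E v = 1 ∨ partDeg E v = r + 1 → partDeg F v = 1) :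
    IsRegularPartOfDeg r (E \ F) := by
  intro v hv
  have hsum : partDeg E v = partDeg F v + partDeg (E \ F) v := by
    rw [← partDeg_union_of_disjoint Set.disjoint_sdiff_right,
      Set.union_sdiff_cancel fun e he => (hF he).1]
  have hpos := partDeg_pos hv
  by_cases hcov : partDeg E v = 1 ∨ partDeg E v = r + 1
  · have := hFdeg v hcov
    omega
  · have hF0 : partDeg F v = 0 :=
      partDeg_eq_zero fun ⟨e, he, hve⟩ => hcov ((hF he).2 v hve)
    have hdv := hdeg v
    simp only [Set.mem_insert_iff, Set.mem_singleton_iff] at hdv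
    omega

theorem exists_partition_one_regular_regular_iff (hr : r ≠ 1)
    (hdeg : ∀ v, partDeg E v ∈ ({1, r, r + 1} : Set ℕ)) :
    (∃ E₁ E₂ : Set (Sym2 V), E₁ ∪ E₂ = E ∧ Disjoint E₁ E₂ ∧
        IsRegularPartOfDeg 1 E₁ ∧ IsRegularPartOfDeg r E₂) ↔
      ∃ F : Set (Sym2 V), F ⊆ {e ∈ E | ∀ v ∈ e, partDeg E v = 1 ∨ partDeg E v = r + 1} ∧
        ∀ v, partDeg E v = 1 ∨ partDeg E v = r + 1 → partDeg F v = 1 := by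
  constructor
  · rintro ⟨E₁, E₂, hunion, hdisj, h₁, h₂⟩
    have hcov := partDeg_eq_one_or_eq_succ_iff hr hunion hdisj h₁ h₂
    refine ⟨E₁, fun e he => ⟨hunion ▸ Or.inl he, fun v hv => ?_⟩, fun v hv => (hcov v).mp hv⟩
    exact (hcov v).mpr (h₁ v ⟨e, he, hv⟩)
  · rintro ⟨F, hF, hFdeg⟩
    refine ⟨F, E \ F, Set.union_sdiff_cancel fun e he => (hF he).1, Set.disjoint_sdiff_right,
      fun v ⟨e, he, hve⟩ => hFdeg v ((hF he).2 v hve), isRegularPartOfDeg_sdiff hdeg hF hFdeg⟩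

end Partition

/-- for a finite graph all of whose vertex degrees lie in {1, 4, 5}, with G' the
induced subgraph on the vertices of degree 1 or 5, the edge set of G decomposes into a
1-regular part and a 4-regular part iff G' has a perfect matching. -/
theorem stmt_10 {V : Type*} [Fintype V] (G : SimpleGraph V)
    (hdeg : ∀ v : V, partDeg G.edgeSet v ∈ ({1, 4, 5} : Set ℕ)) :
    (∃ E₁ E₂ : Set (Sym2 V),
        E₁ ∪ E₂ = G.edgeSet ∧ Disjoint E₁ E₂ ∧
        IsRegularPartOfDeg 1 E₁ ∧ IsRegularPartOfDeg 4 E₂) ↔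
      (∃ F : Set (Sym2 V),
        F ⊆ {e ∈ G.edgeSet | ∀ v : V, v ∈ e →
              (partDeg G.edgeSet v = 1 ∨ partDeg G.edgeSet v = 5)} ∧
        ∀ v : V, (partDeg G.edgeSet v = 1 ∨ partDeg G.edgeSet v = 5) →
          partDeg F v = 1) :=
  exists_partition_one_regular_regular_iff (by decide) hdeg
end

section
/- Let G be a finite graph in which every vertex has degree 1, 2 or 3, and let G' be the induced subgraph of G on the set of vertices of degree 1 or 3. Then E(G) can be partitioned into two (possibly empty) parts E₁ and E₂ such that E₁ is a 1-regular part and E₂ is a 2-regular part if and only if G' has a perfect matching, i.e., a set M of edges of G' such that every vertex of G' is incident to exactly one edge of M. -/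
open SimpleGraph

variable {V : Type*}

/-
Writing `d`, `d₁`, `d₂` for the degrees of a vertex in `E(G)`, `E₁`, `E₂`, a decomposition into a
1-regular and a 2-regular part has `d₁ ∈ {0, 1}`, `d₂ ∈ {0, 2}` and `d = d₁ + d₂`, so `d₁ = d % 2`:
the part `E₁` is exactly a set of edges with degree `d % 2` at every vertex. When all degrees are at
most 3 such a set is the same as a perfect matching of `G'` (its edges only meet odd vertices), and
conversely its complement in `E(G)` has degree `d - d % 2 ∈ {0, 2}` everywhere, hence is 2-regular.
-/

section partDeg

variable [Finite V] {E E₁ E₂ F : Set (Sym2 V)}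

lemma partDeg_union (h : Disjoint E₁ E₂) (v : V) :
    partDeg (E₁ ∪ E₂) v = partDeg E₁ v + partDeg E₂ v := by
  unfold partDeg
  rw [show {e ∈ E₁ ∪ E₂ | v ∈ e} = {e ∈ E₁ | v ∈ e} ∪ {e ∈ E₂ | v ∈ e} from Set.sep_union,
    Set.ncard_union_eq (h.mono (Set.sep_subset _ _) (Set.sep_subset _ _)) (Set.toFinite _)
      (Set.toFinite _)]

lemma partDeg_eq_zero_iff {v : V} : partDeg E v = 0 ↔ ¬ ∃ e ∈ E, v ∈ e := by
  simp [partDeg, Set.ncard_eq_zero (Set.toFinite _), Set.eq_empty_iff_forall_notMem]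

lemma IsRegularPartOfDeg.partDeg_eq_zero_or {r : ℕ} (h : IsRegularPartOfDeg r E) (v : V) :
    partDeg E v = 0 ∨ partDeg E v = r := by
  by_cases hv : ∃ e ∈ E, v ∈ e
  · exact Or.inr (h v hv)
  · exact Or.inl (partDeg_eq_zero_iff.2 hv)

lemma partDeg_eq_mod_two_of_union (hunion : E₁ ∪ E₂ = E) (hdisj : Disjoint E₁ E₂)
    (h₁ : IsRegularPartOfDeg 1 E₁) (h₂ : IsRegularPartOfDeg 2 E₂) (v : V) :
    partDeg E₁ v = partDeg E v % 2 := by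
  rw [← hunion, partDeg_union hdisj]
  rcases h₁.partDeg_eq_zero_or v with h | h <;> rcases h₂.partDeg_eq_zero_or v with h' | h' <;>
    omega

lemma isRegularPartOfDeg_one_of_partDeg_eq_mod_two (hF : ∀ v, partDeg F v = partDeg E v % 2) :
    IsRegularPartOfDeg 1 F := by
  intro v hv
  have := partDeg_eq_zero_iff.not_left.2 hv
  have := hF v
  omega

lemma isRegularPartOfDeg_two_diff_of_partDeg_eq_mod_two (hFE : F ⊆ E)
    (hF : ∀ v, partDeg F v = partDeg E v % 2) (hE : ∀ v, partDeg E v ≤ 3) :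
    IsRegularPartOfDeg 2 (E \ F) := by
  intro v hv
  have hpos := partDeg_eq_zero_iff.not_left.2 hv
  have hsum : partDeg E v = partDeg F v + partDeg (E \ F) v := by
    rw [← partDeg_union Set.disjoint_sdiff_right, Set.union_sdiff_cancel hFE]
  have := hF v
  have := hE v
  omega

lemma perfectMatching_odd_iff_partDeg_eq_mod_two (hE : ∀ v, partDeg E v ≤ 3) :
    (F ⊆ {e ∈ E | ∀ v : V, v ∈ e → (partDeg E v = 1 ∨ partDeg E v = 3)} ∧
        ∀ v : V, (partDeg E v = 1 ∨ partDeg E v = 3) → partDeg F v = 1) ↔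
      F ⊆ E ∧ ∀ v, partDeg F v = partDeg E v % 2 := by
  constructor
  · rintro ⟨hFsub, hFdeg⟩
    refine ⟨fun e he => (hFsub he).1, fun v => ?_⟩
    by_cases hodd : partDeg E v = 1 ∨ partDeg E v = 3
    · rw [hFdeg v hodd]
      omega
    · have : partDeg F v = 0 :=
        partDeg_eq_zero_iff.2 fun ⟨e, he, hv⟩ => hodd ((hFsub he).2 v hv)
      have := hE v
      omega
  · rintro ⟨hFE, hF⟩
    refine ⟨fun e he => ⟨hFE he, fun v hv => ?_⟩, fun v hodd => ?_⟩
    · have := partDeg_eq_zero_iff.not_left.2 ⟨e, he, hv⟩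
      have := hF v
      have := hE v
      omega
    · rw [hF v]
      omega

end partDeg

/-- for a finite graph all of whose vertex degrees lie in {1, 2, 3}, with G' the
induced subgraph on the vertices of degree 1 or 3, the edge set of G decomposes into a
1-regular part and a 2-regular part iff G' has a perfect matching. -/
theorem stmt_12 {V : Type*} [Fintype V] (G : SimpleGraph V)
    (hdeg : ∀ v : V, partDeg G.edgeSet v ∈ ({1, 2, 3} : Set ℕ)) :
    (∃ E₁ E₂ : Set (Sym2 V),
        E₁ ∪ E₂ = G.edgeSet ∧ Disjoint E₁ E₂ ∧
        IsRegularPartOfDeg 1 E₁ ∧ IsRegularPartOfDeg 2 E₂) ↔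
      (∃ F : Set (Sym2 V),
        F ⊆ {e ∈ G.edgeSet | ∀ v : V, v ∈ e →
              (partDeg G.edgeSet v = 1 ∨ partDeg G.edgeSet v = 3)} ∧
        ∀ v : V, (partDeg G.edgeSet v = 1 ∨ partDeg G.edgeSet v = 3) →
          partDeg F v = 1) := by
  have hle : ∀ v, partDeg G.edgeSet v ≤ 3 := fun v => by
    have h := hdeg v
    simp only [Set.mem_insert_iff, Set.mem_singleton_iff] at h
    omega
  simp only [perfectMatching_odd_iff_partDeg_eq_mod_two hle]
  constructor
  · rintro ⟨E₁, E₂, hunion, hdisj, h₁, h₂⟩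
    exact ⟨E₁, hunion ▸ Set.subset_union_left, partDeg_eq_mod_two_of_union hunion hdisj h₁ h₂⟩
  · rintro ⟨F, hFE, hF⟩
    exact ⟨F, G.edgeSet \ F, Set.union_sdiff_cancel hFE, Set.disjoint_sdiff_right,
      isRegularPartOfDeg_one_of_partDeg_eq_mod_two hF,
      isRegularPartOfDeg_two_diff_of_partDeg_eq_mod_two hFE hF hle⟩
end
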